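/- arXiv:1511.00488 — 2 statements merged into one kernel-verified Lean document; each statement's English description precedes it below -/
import Mathlib

section
/- Let m_m be a positive even integer, b > 0, z ∈ ℂ, w ∈ ℂ×, and set s(w) = (w−w⁻¹)/2, c(w) = (w+w⁻¹)/2. Define P(z,w) = ∏_{k=1}^{m_m−1} [ ((z/b)·s(w) − m_m/2 + k)² + (z/b)²·c(w)² ]. Then P(z, i·w) = −P(z, w). -/
/-!
Write `X = (z/b) s(w)`, `Y = (z/b) c(w)` and `d_k = k - m/2`. Since `s(iw) = i c(w)` and
`c(iw) = i s(w)`, the `k`-th factor of `P(z, w)` is `(X + d_k + iY)(X + d_k - iY)` and that of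
`P(z, iw)` is `(X + d_k + iY)(-X + d_k + iY)`. The first linear factors agree. The offsets `d_k`
are symmetric under `k ↦ m - k`, so the product of the second factors of `P(z, iw)` equals
`∏ (-X - d_k + iY) = (-1)^(m-1) ∏ (X + d_k - iY)`, and `m - 1` is odd.
-/

open Complex Finset

theorem prod_Icc_neg_natCast_sub_half {K M : Type*} [Field K] [NeZero (2 : K)] [CommMonoid M]
    (m : ℕ) (f : K → M) :
    ∏ k ∈ Icc 1 (m - 1), f (-((k : K) - m / 2)) = ∏ k ∈ Icc 1 (m - 1), f ((k : K) - m / 2) := by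
  refine prod_nbij' (fun k => m - k) (fun k => m - k) ?_ ?_ ?_ ?_ ?_ <;>
    intro k hk <;> simp only [mem_Icc] at hk ⊢
  · omega
  · omega
  · omega
  · omega
  · rw [Nat.cast_sub (by omega : k ≤ m)]
    congr 1
    linear_combination add_halves (m : K)

theorem prod_Icc_one_pred_neg_of_even {M : Type*} [CommMonoid M] [HasDistribNeg M] {m : ℕ}
    (hm : 0 < m) (he : Even m) (f : ℕ → M) :
    ∏ k ∈ Icc 1 (m - 1), -f k = -∏ k ∈ Icc 1 (m - 1), f k := by
  have hodd : Odd (m - 1) := by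
    obtain ⟨n, rfl⟩ := he
    exact ⟨n - 1, by omega⟩
  rw [prod_neg, Nat.card_Icc, Nat.add_sub_cancel, hodd.neg_one_pow, neg_one_mul]

theorem I_mul_sub_inv_div_two (w : ℂ) : (I * w - (I * w)⁻¹) / 2 = I * ((w + w⁻¹) / 2) := by
  rw [mul_inv, inv_I]; ring

theorem I_mul_add_inv_div_two (w : ℂ) : (I * w + (I * w)⁻¹) / 2 = I * ((w - w⁻¹) / 2) := by
  rw [mul_inv, inv_I]; ring

theorem prod_sq_add_sq_I_mul_swap {m : ℕ} (hm : 0 < m) (he : Even m) (a x y : ℂ) :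
    ∏ k ∈ Icc 1 (m - 1), ((a * (I * y) - m / 2 + k) ^ 2 + a ^ 2 * (I * x) ^ 2)
      = -∏ k ∈ Icc 1 (m - 1), ((a * x - m / 2 + k) ^ 2 + a ^ 2 * y ^ 2) := by
  set X := a * x
  set Y := a * y
  calc ∏ k ∈ Icc 1 (m - 1), ((a * (I * y) - m / 2 + k) ^ 2 + a ^ 2 * (I * x) ^ 2)
      = ∏ k ∈ Icc 1 (m - 1), ((X + I * Y + ((k : ℂ) - m / 2)) * (-X + I * Y + ((k : ℂ) - m / 2))) :=
        prod_congr rfl fun k _ => by linear_combination X ^ 2 * I_sq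
    _ = (∏ k ∈ Icc 1 (m - 1), (X + I * Y + ((k : ℂ) - m / 2)))
          * ∏ k ∈ Icc 1 (m - 1), -(X - I * Y + ((k : ℂ) - m / 2)) := by
        rw [prod_mul_distrib, ← prod_Icc_neg_natCast_sub_half m (fun t => -X + I * Y + t)]
        congr 1
        exact prod_congr rfl fun k _ => by ring
    _ = -∏ k ∈ Icc 1 (m - 1), ((a * x - m / 2 + k) ^ 2 + a ^ 2 * y ^ 2) := by
        rw [prod_Icc_one_pred_neg_of_even hm he, mul_neg, ← prod_mul_distrib]
        exact congrArg _ <| prod_congr rfl fun k _ => by linear_combination -Y ^ 2 * I_sq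

theorem product_factor_anti_invariance_general (mm : ℕ) (hmm : 0 < mm) (hme : Even mm)
    (b : ℝ)
    (c s : ℂ → ℂ)
    (hc : ∀ w : ℂ, c w = (w + w⁻¹) / 2)
    (hs : ∀ w : ℂ, s w = (w - w⁻¹) / 2)
    (P : ℂ → ℂ → ℂ)
    (hP : ∀ z w : ℂ, P z w =
      ∏ k ∈ Finset.Icc 1 (mm - 1),
        (((z / (b : ℂ)) * s w - (mm : ℂ) / 2 + (k : ℂ)) ^ 2
          + (z / (b : ℂ)) ^ 2 * (c w) ^ 2)) :
    ∀ (z : ℂ) (w : ℂ), w ≠ 0 → P z (I * w) = -P z w := by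
  intro z w _
  have hsI : s (I * w) = I * c w := by rw [hs, hc, I_mul_sub_inv_div_two]
  have hcI : c (I * w) = I * s w := by rw [hc, hs, I_mul_add_inv_div_two]
  rw [hP, hP, hsI, hcI]
  exact prod_sq_add_sq_I_mul_swap hmm hme _ _ _

theorem product_factor_anti_invariance (mm : ℕ) (hmm : 0 < mm) (hme : Even mm)
    (b : ℝ) (hb : 0 < b)
    (c s : ℂ → ℂ)
    (hc : ∀ w : ℂ, c w = (w + w⁻¹) / 2)
    (hs : ∀ w : ℂ, s w = (w - w⁻¹) / 2)
    (P : ℂ → ℂ → ℂ)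
    (hP : ∀ z w : ℂ, P z w =
      ∏ k ∈ Finset.Icc 1 (mm - 1),
        (((z / (b : ℂ)) * s w - (mm : ℂ) / 2 + (k : ℂ)) ^ 2
          + (z / (b : ℂ)) ^ 2 * (c w) ^ 2)) :
    ∀ (z : ℂ) (w : ℂ), w ≠ 0 → P z (I * w) = -P z w :=
  product_factor_anti_invariance_general mm hmm hme b c s hc hs P hP
end

section
/- Let m_m be a positive even integer, b>0, ρ̃₁>0, and L_j = b(ρ̃₁+j). For ℓ,m ∈ ℤ_{≥0} with m ∉ [ℓ−(m_m/2−1), ℓ+(m_m/2−1)], the quantity ϑ₀(L_ℓ/b, L_m/b) = ((L_m² − L_ℓ²)/b²)·∏_{k=1}^{m_m−1}((L_m/b − (m_m/2 − k))² − (L_ℓ/b)²) is strictly positive. -/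
/-!
Put `x = L ℓ / b = ρ₁ + ℓ`, `y = L m / b = ρ₁ + m` and `h = m_m / 2`. Each factor has the form
`(y + t)² - x² = (m - ℓ + t)(y + t + x)` with `|t| ≤ h - 1` and `y + t + x > 0`, so when
`|m - ℓ| ≥ h` it has the sign of `m - ℓ`: for `m ≥ ℓ + h` all factors are positive, and for
`m + h ≤ ℓ` the leading factor and the `2h - 1` factors of the product are all
negative, an even number `2h` of negative factors in total.
-/

open Finset

theorem Finset.prod_neg_of_odd_card {ι R : Type*} [CommRing R] [LinearOrder R]
    [IsStrictOrderedRing R] {s : Finset ι} {f : ι → R} (hf : ∀ i ∈ s, f i < 0)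
    (hs : Odd #s) : ∏ i ∈ s, f i < 0 := by
  have hpos : 0 < ∏ i ∈ s, -f i := prod_pos fun i hi => neg_pos.2 (hf i hi)
  rw [prod_neg, hs.neg_one_pow, neg_one_mul] at hpos
  exact neg_pos.1 hpos

theorem prod_shifted_sq_sub_sq_pos {x y : ℝ} (h : ℕ) (hx : 0 ≤ x) (hxy : x + h ≤ y) :
    0 < ∏ k ∈ Icc 1 (2 * h - 1), ((y - ((h : ℝ) - k)) ^ 2 - x ^ 2) := by
  refine prod_pos fun k hk => sub_pos.2 (sq_lt_sq' ?_ ?_)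
  all_goals
    have hk1 : (1 : ℝ) ≤ k := by exact_mod_cast (mem_Icc.1 hk).1
    linarith

theorem prod_shifted_sq_sub_sq_neg {x y : ℝ} {h : ℕ} (hh : 0 < h) (hy : 0 ≤ y)
    (hyx : y + h ≤ x) :
    ∏ k ∈ Icc 1 (2 * h - 1), ((y - ((h : ℝ) - k)) ^ 2 - x ^ 2) < 0 := by
  refine prod_neg_of_odd_card (fun k hk => sub_neg.2 (sq_lt_sq' ?_ ?_)) ?_
  · have hk1 : (1 : ℝ) ≤ k := by exact_mod_cast (mem_Icc.1 hk).1
    linarith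
  · have hk2 : (k : ℝ) + 1 ≤ 2 * h := by
      exact_mod_cast (show k + 1 ≤ 2 * h by have := (mem_Icc.1 hk).2; omega)
    linarith
  · rw [Nat.card_Icc]
    exact ⟨h - 1, by omega⟩

theorem theta0_positive_at_poles (mm : ℕ) (hmm : 0 < mm) (hme : Even mm)
    (b ρ₁ : ℝ) (hb : 0 < b) (hρ₁ : 0 < ρ₁)
    (L : ℕ → ℝ) (hL : ∀ j : ℕ, L j = b * (ρ₁ + j))
    (ℓ m : ℕ)
    (hm : (m : ℤ) ∉ Finset.Icc ((ℓ : ℤ) - (((mm / 2 : ℕ) : ℤ) - 1))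
      ((ℓ : ℤ) + (((mm / 2 : ℕ) : ℤ) - 1))) :
    0 < ((L m) ^ 2 - (L ℓ) ^ 2) / b ^ 2 *
      ∏ k ∈ Finset.Icc 1 (mm - 1),
        ((L m / b - ((mm : ℝ) / 2 - (k : ℝ))) ^ 2 - (L ℓ / b) ^ 2) := by
  obtain ⟨h, rfl⟩ := hme
  have hh : 0 < h := by omega
  have hsep : m + h ≤ ℓ ∨ ℓ + h ≤ m := by
    simp only [mem_Icc, not_and_or, not_le] at hm
    omega
  have hdiv : ∀ j : ℕ, L j / b = ρ₁ + j := fun j => by rw [hL, mul_div_cancel_left₀ _ hb.ne']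
  have hhalf : ((h + h : ℕ) : ℝ) / 2 = h := by push_cast; ring
  rw [sub_div, ← div_pow, ← div_pow, hdiv, hdiv, hhalf, show h + h - 1 = 2 * h - 1 by omega]
  have hhr : (1 : ℝ) ≤ h := by exact_mod_cast hh
  rcases hsep with hlt | hgt
  · have hlt' : (m : ℝ) + h ≤ ℓ := by exact_mod_cast hlt
    exact mul_pos_of_neg_of_neg (sub_neg.2 (sq_lt_sq' (by linarith) (by linarith)))
      (prod_shifted_sq_sub_sq_neg hh (by positivity) (by linarith))
  · have hgt' : (ℓ : ℝ) + h ≤ m := by exact_mod_cast hgt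
    exact mul_pos (sub_pos.2 (sq_lt_sq' (by linarith) (by linarith)))
      (prod_shifted_sq_sub_sq_pos h (by positivity) (by linarith))
end
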